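/- arXiv:2006.02566 — 7 statements merged into one kernel-verified Lean document; each statement's English description precedes it below -/
import Mathlib

section
/- Along any solution of the ODE system x' = −2x(r_i − S/(4n+3)), y' = −2y(r_j − S/(4n+3)), z' = −2z(r_k − S/(4n+3)) with 0 < x ≤ y ≤ z (and s determined by s = (xyz)^{−1/(4n)}), the ratios y/z and x/z are non-decreasing in t. -/
open Real

/-- Ricci eigenvalue `r_i` of the `Sp(n+1)`-invariant metric. -/
noncomputable def rI (n : ℕ) (x y z s : ℝ) : ℝ :=
  2 * ((x^2 - y^2 - z^2) / (x*y*z)) + 4/x + 4*n*x/s^2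

noncomputable def rJ (n : ℕ) (x y z s : ℝ) : ℝ :=
  2 * ((y^2 - x^2 - z^2) / (x*y*z)) + 4/y + 4*n*y/s^2

noncomputable def rK (n : ℕ) (x y z s : ℝ) : ℝ :=
  2 * ((z^2 - x^2 - y^2) / (x*y*z)) + 4/z + 4*n*z/s^2

noncomputable def rH (n : ℕ) (x y z s : ℝ) : ℝ :=
  -2 * ((x + y + z) / s^2) + (4*n + 8)/s

/-- Scalar curvature (trace of the Ricci endomorphism). -/
noncomputable def Scal (n : ℕ) (x y z s : ℝ) : ℝ :=
  rI n x y z s + rJ n x y z s + rK n x y z s + 4*n * rH n x y z s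

/-- The volume normalization `s = (xyz)^{-1/(4n)}`. -/
noncomputable def sVol (n : ℕ) (x y z : ℝ) : ℝ :=
  (x*y*z) ^ (-(1 / (4*(n:ℝ))))


lemma key (n : ℕ) (s d u v w : ℝ) (hu : 0 < u) (hv : 0 < v) (hw : 0 < w)
    (hvw : v ≤ w) (huw : 0 ≤ w + v - u) (hD : d = u*v*w) :
    2*((v^2 - u^2 - w^2)/d) + 4/v + 4*(n:ℝ)*v/s^2
      ≤ 2*((w^2 - u^2 - v^2)/d) + 4/w + 4*(n:ℝ)*w/s^2 := by
  subst hD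
  have e1 : 2*((w^2-u^2-v^2)/(u*v*w)) + 4/w - (2*((v^2-u^2-w^2)/(u*v*w)) + 4/v)
      = 4*(w-v)*(w+v-u)/(u*v*w) := by
    field_simp
    ring
  have e2 : 0 ≤ 4*(w-v)*(w+v-u)/(u*v*w) :=
    div_nonneg (by nlinarith) (by positivity)
  have e3 : 0 ≤ (4*(n:ℝ)*w - 4*(n:ℝ)*v)/s^2 :=
    div_nonneg (by nlinarith [Nat.cast_nonneg (α := ℝ) n]) (sq_nonneg s)
  rw [sub_div] at e3
  linarith

lemma rJ_le_rK (n : ℕ) (x y z s : ℝ) (hx : 0 < x) (hxy : x ≤ y) (hyz : y ≤ z) :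
    rJ n x y z s ≤ rK n x y z s := by
  have hy : 0 < y := hx.trans_le hxy
  have hz : 0 < z := hy.trans_le hyz
  exact key n s (x*y*z) x y z hx hy hz hyz (by linarith) rfl

lemma rI_le_rK (n : ℕ) (x y z s : ℝ) (hx : 0 < x) (hxy : x ≤ y) (hyz : y ≤ z) :
    rI n x y z s ≤ rK n x y z s := by
  have hy : 0 < y := hx.trans_le hxy
  have hz : 0 < z := hy.trans_le hyz
  have h := key n s (x*y*z) y x z hy hx hz (hxy.trans hyz) (by linarith) (by ring)
  unfold rI rK
  ring_nf at h ⊢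
  exact h

/-- Along the normalized Ricci flow in the invariant region `0 < x ≤ y ≤ z`,
the ratios `y/z` and `x/z` are non-decreasing in `t`. -/
theorem ratios_nondecreasing (n : ℕ) (hn : 1 ≤ n) (x y z : ℝ → ℝ)
    (hpos : ∀ t, 0 < x t) (hxy : ∀ t, x t ≤ y t) (hyz : ∀ t, y t ≤ z t)
    (hx : ∀ t, HasDerivAt x
      (-2 * x t * (rI n (x t) (y t) (z t) (sVol n (x t) (y t) (z t))
        - Scal n (x t) (y t) (z t) (sVol n (x t) (y t) (z t)) / (4*n + 3))) t)
    (hy : ∀ t, HasDerivAt y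
      (-2 * y t * (rJ n (x t) (y t) (z t) (sVol n (x t) (y t) (z t))
        - Scal n (x t) (y t) (z t) (sVol n (x t) (y t) (z t)) / (4*n + 3))) t)
    (hz : ∀ t, HasDerivAt z
      (-2 * z t * (rK n (x t) (y t) (z t) (sVol n (x t) (y t) (z t))
        - Scal n (x t) (y t) (z t) (sVol n (x t) (y t) (z t)) / (4*n + 3))) t) :
    Monotone (fun t => y t / z t) ∧ Monotone (fun t => x t / z t) := by
  have hy0 : ∀ t, 0 < y t := fun t => (hpos t).trans_le (hxy t)
  have hz0 : ∀ t, 0 < z t := fun t => (hy0 t).trans_le (hyz t)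
  constructor
  · have hq : ∀ t, HasDerivAt (fun t => y t / z t)
        (((-2 * y t * (rJ n (x t) (y t) (z t) (sVol n (x t) (y t) (z t))
          - Scal n (x t) (y t) (z t) (sVol n (x t) (y t) (z t)) / (4*n + 3))) * z t
        - y t * (-2 * z t * (rK n (x t) (y t) (z t) (sVol n (x t) (y t) (z t))
          - Scal n (x t) (y t) (z t) (sVol n (x t) (y t) (z t)) / (4*n + 3)))) / (z t)^2) t :=
      fun t => (hy t).div (hz t) (hz0 t).ne'
    have hd : ∀ t, (0:ℝ) ≤ ((-2 * y t * (rJ n (x t) (y t) (z t) (sVol n (x t) (y t) (z t))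
          - Scal n (x t) (y t) (z t) (sVol n (x t) (y t) (z t)) / (4*n + 3))) * z t
        - y t * (-2 * z t * (rK n (x t) (y t) (z t) (sVol n (x t) (y t) (z t))
          - Scal n (x t) (y t) (z t) (sVol n (x t) (y t) (z t)) / (4*n + 3)))) / (z t)^2 := by
      intro t
      apply div_nonneg _ (sq_nonneg _)
      have heq : (-2 * y t * (rJ n (x t) (y t) (z t) (sVol n (x t) (y t) (z t))
          - Scal n (x t) (y t) (z t) (sVol n (x t) (y t) (z t)) / (4*n + 3))) * z t
        - y t * (-2 * z t * (rK n (x t) (y t) (z t) (sVol n (x t) (y t) (z t))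
          - Scal n (x t) (y t) (z t) (sVol n (x t) (y t) (z t)) / (4*n + 3)))
        = 2 * (y t * z t) * (rK n (x t) (y t) (z t) (sVol n (x t) (y t) (z t))
          - rJ n (x t) (y t) (z t) (sVol n (x t) (y t) (z t))) := by ring
      rw [heq]
      have := rJ_le_rK n (x t) (y t) (z t) (sVol n (x t) (y t) (z t)) (hpos t) (hxy t) (hyz t)
      have hyzp : 0 < y t * z t := mul_pos (hy0 t) (hz0 t)
      nlinarith
    apply monotone_of_deriv_nonneg (fun t => (hq t).differentiableAt)
    intro t
    rw [(hq t).deriv]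
    exact hd t
  · have hq : ∀ t, HasDerivAt (fun t => x t / z t)
        (((-2 * x t * (rI n (x t) (y t) (z t) (sVol n (x t) (y t) (z t))
          - Scal n (x t) (y t) (z t) (sVol n (x t) (y t) (z t)) / (4*n + 3))) * z t
        - x t * (-2 * z t * (rK n (x t) (y t) (z t) (sVol n (x t) (y t) (z t))
          - Scal n (x t) (y t) (z t) (sVol n (x t) (y t) (z t)) / (4*n + 3)))) / (z t)^2) t :=
      fun t => (hx t).div (hz t) (hz0 t).ne'
    have hd : ∀ t, (0:ℝ) ≤ ((-2 * x t * (rI n (x t) (y t) (z t) (sVol n (x t) (y t) (z t))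
          - Scal n (x t) (y t) (z t) (sVol n (x t) (y t) (z t)) / (4*n + 3))) * z t
        - x t * (-2 * z t * (rK n (x t) (y t) (z t) (sVol n (x t) (y t) (z t))
          - Scal n (x t) (y t) (z t) (sVol n (x t) (y t) (z t)) / (4*n + 3)))) / (z t)^2 := by
      intro t
      apply div_nonneg _ (sq_nonneg _)
      have heq : (-2 * x t * (rI n (x t) (y t) (z t) (sVol n (x t) (y t) (z t))
          - Scal n (x t) (y t) (z t) (sVol n (x t) (y t) (z t)) / (4*n + 3))) * z t
        - x t * (-2 * z t * (rK n (x t) (y t) (z t) (sVol n (x t) (y t) (z t))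
          - Scal n (x t) (y t) (z t) (sVol n (x t) (y t) (z t)) / (4*n + 3)))
        = 2 * (x t * z t) * (rK n (x t) (y t) (z t) (sVol n (x t) (y t) (z t))
          - rI n (x t) (y t) (z t) (sVol n (x t) (y t) (z t))) := by ring
      rw [heq]
      have := rI_le_rK n (x t) (y t) (z t) (sVol n (x t) (y t) (z t)) (hpos t) (hxy t) (hyz t)
      have hxzp : 0 < x t * z t := mul_pos (hpos t) (hz0 t)
      nlinarith
    apply monotone_of_deriv_nonneg (fun t => (hq t).differentiableAt)
    intro t
    rw [(hq t).deriv]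
    exact hd t
end

section
/- The scalar curvature function S(x, y, z) = 4/x + 4/y + 4/z − 2z/(xy) − 2y/(xz) − 2x/(yz) + 16n(n+2)(xyz)^{1/(4n)} − 4n(x+y+z)(xyz)^{1/(2n)} on positive reals has exactly two critical points of the form x = y = z = c with gradient parallel to (1,1,1) giving Einstein metrics: c = 1 (the round metric) and c = (2n+3)^{−4n/(4n+3)} (Jensen's second Einstein metric). That is, both points x = y = z = 1 and x = y = z = (2n+3)^{−4n/(4n+3)} satisfy r_i = r_j = r_k = r_h where r_i, r_j, r_k, r_h are the Ricci eigenvalues with s = (xyz)^{−1/(4n)}. -/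
/-!
On the diagonal `x = y = z = c` the three vertical eigenvalues coincide, so the Einstein condition
reduces to `r_k = r_h`. Since `s = c^{-3/(4n)}`, multiplying by `c` turns both sides into
polynomials in `u = c / s = c^{(4n+3)/(4n)}`, and `r_k = r_h` becomes
`(u - 1)((4n+6)u - 2) = 0`. The two roots `u = 1` and `u = 1/(2n+3)` give the two metrics,
because `c ↦ c^{(4n+3)/(4n)}` is injective on the positive reals.
-/

open Real

lemma div_rpow_cube_neg_inv {c a : ℝ} (hc : 0 < c) (ha : a ≠ 0) :
    c / (c*c*c) ^ (-(1 / (4*a))) = c ^ ((4*a+3)/(4*a)) := by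
  have hcube : c*c*c = c ^ (3:ℝ) := by norm_num [pow_succ]
  rw [hcube, ← rpow_mul hc.le, show (4*a+3)/(4*a) = 1 - 3 * -(1/(4*a)) by field_simp; ring,
    rpow_sub hc, rpow_one]

lemma mul_ricci_vertical_diag (a c s : ℝ) (hc : c ≠ 0) :
    c * (2 * ((c^2 - c^2 - c^2) / (c*c*c)) + 4/c + 4*a*c/s^2) = 2 + 4*a*(c/s)^2 := by
  field_simp
  ring

lemma mul_ricci_horizontal_diag (a c s : ℝ) :
    c * (-2 * ((c + c + c) / s^2) + (4*a + 8)/s) = -6*(c/s)^2 + (4*a+8)*(c/s) := by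
  ring

lemma jensen_quadratic_iff {a u : ℝ} (ha : 2*a+3 ≠ 0) :
    2 + 4*a*u^2 = -6*u^2 + (4*a+8)*u ↔ u = 1 ∨ u = (2*a+3)⁻¹ := by
  have hfactor : 2 + 4*a*u^2 - (-6*u^2 + (4*a+8)*u)
      = (2 * (2*a+3)) * ((u - 1) * (u - (2*a+3)⁻¹)) := by
    field_simp
    ring
  rw [← sub_eq_zero, hfactor, mul_eq_zero_iff_left (mul_ne_zero two_ne_zero ha), mul_eq_zero,
    sub_eq_zero, sub_eq_zero]

/-- Among metrics with `x = y = z = c` (and `s = (xyz)^{-1/(4n)}`), the Einstein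
condition `r_i = r_j = r_k = r_h` holds exactly for `c = 1` (round metric) and
`c = (2n+3)^{-4n/(4n+3)}` (Jensen's second Einstein metric). -/
theorem einstein_points (n : ℕ) (hn : 1 ≤ n) (c : ℝ) (hc : 0 < c) :
    let s : ℝ := (c*c*c) ^ (-(1 / (4*(n:ℝ))))
    let ri : ℝ := 2 * ((c^2 - c^2 - c^2) / (c*c*c)) + 4/c + 4*n*c/s^2
    let rj : ℝ := 2 * ((c^2 - c^2 - c^2) / (c*c*c)) + 4/c + 4*n*c/s^2
    let rk : ℝ := 2 * ((c^2 - c^2 - c^2) / (c*c*c)) + 4/c + 4*n*c/s^2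
    let rh : ℝ := -2 * ((c + c + c) / s^2) + (4*n + 8)/s
    (ri = rj ∧ rj = rk ∧ rk = rh)
      ↔ (c = 1 ∨ c = (2*(n:ℝ)+3) ^ (-(4*(n:ℝ)) / (4*(n:ℝ)+3))) := by
  intro s ri rj rk rh
  have hn' : (0:ℝ) < n := by exact_mod_cast hn
  set e : ℝ := (4*n+3)/(4*n) with he_def
  have he : e ≠ 0 := by positivity
  have hjensen : ((2*(n:ℝ)+3) ^ (-(4*(n:ℝ)) / (4*(n:ℝ)+3))) ^ e = (2*n+3 : ℝ)⁻¹ := by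
    rw [← rpow_mul (by positivity), ← rpow_neg_one]
    congr 1
    rw [he_def]
    field_simp
  have hround : c ^ e = 1 ↔ c = 1 := by simpa using rpow_left_inj hc.le zero_le_one he
  have hrk : c * rk = 2 + 4*n*(c^e)^2 := by
    rw [mul_ricci_vertical_diag _ _ _ hc.ne', div_rpow_cube_neg_inv hc hn'.ne']
  have hrh : c * rh = -6*(c^e)^2 + (4*n+8)*c^e := by
    rw [mul_ricci_horizontal_diag, div_rpow_cube_neg_inv hc hn'.ne']
  rw [and_iff_right rfl, and_iff_right rfl, ← mul_right_inj' hc.ne', hrk, hrh,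
    jensen_quadratic_iff (by positivity), hround, ← hjensen, rpow_left_inj hc.le (by positivity) he]
end

section
/- At the round metric x = y = z = 1 (so s = 1), the linearization [[a,b,b],[b,a,b],[b,b,a]] of the normalized Ricci flow has a = −8(1+n) and b = 0; hence all eigenvalues are negative and the round metric is a stable node. -/
/-- The normalized Ricci flow vector field in the coordinates `(x,y,z)` with
`s = (xyz)^{-1/(4n)}`. -/
noncomputable def flowField (n : ℕ) (p : Fin 3 → ℝ) : Fin 3 → ℝ :=
  let x := p 0; let y := p 1; let z := p 2; let s := sVol n (p 0) (p 1) (p 2)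
  ![-2 * x * (rI n x y z s - Scal n x y z s / (4*n + 3)),
    -2 * y * (rJ n x y z s - Scal n x y z s / (4*n + 3)),
    -2 * z * (rK n x y z s - Scal n x y z s / (4*n + 3))]

/-!
Each coordinate of the field has the form `-2x (r - S/(4n+3))`, and at the round point
`r = S/(4n+3)`, so only the derivative of the bracket survives. The volume constraint gives
`ds = -(dx + dy + dz)/(4n)`; along it the scalar curvature is stationary and `dr_i = (4 + 4n) dx`,
so the linearization is `-8(1+n)` times the identity.
-/

section QuotientRule

variable {𝕜 E : Type*} [NontriviallyNormedField 𝕜] [NormedAddCommGroup E] [NormedSpace 𝕜 E]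
  {f g : E → 𝕜} {f' g' : E →L[𝕜] 𝕜} {p : E}

theorem HasFDerivAt.inv (hg : HasFDerivAt g g' p) (hgp : g p ≠ 0) :
    HasFDerivAt (fun q => (g q)⁻¹) (-(g p ^ 2)⁻¹ • g') p :=
  (hasDerivAt_inv hgp).comp_hasFDerivAt p hg

open ContinuousLinearMap in
theorem HasFDerivAt.div (hf : HasFDerivAt f f' p) (hg : HasFDerivAt g g' p) (hgp : g p ≠ 0) :
    HasFDerivAt (fun q => f q / g q) ((g p)⁻¹ • f' - (f p / g p ^ 2) • g') p := by
  simp only [div_eq_mul_inv]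
  refine (hf.mul (hg.inv hgp)).congr_fderiv ?_
  ext v
  simp only [add_apply, sub_apply, smul_apply, smul_eq_mul]
  ring

end QuotientRule

theorem rJ_eq_rI (n : ℕ) (x y z s : ℝ) : rJ n x y z s = rI n y x z s := by
  unfold rI rJ
  ring

theorem rK_eq_rI (n : ℕ) (x y z s : ℝ) : rK n x y z s = rI n z x y s := by
  unfold rI rK
  ring

theorem sVol_one (n : ℕ) : sVol n 1 1 1 = 1 := by
  simp [sVol]

noncomputable def flowCoord (n : ℕ) (x y z : ℝ) : ℝ :=
  -2 * x * (rI n x y z (sVol n x y z) - Scal n x y z (sVol n x y z) / (4 * n + 3))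

theorem rI_sub_Scal_div_round (n : ℕ) : rI n 1 1 1 1 - Scal n 1 1 1 1 / (4 * n + 3) = 0 := by
  unfold Scal rI rJ rK rH
  field_simp
  ring

theorem sVol_swap (n : ℕ) (x y z : ℝ) : sVol n x y z = sVol n y x z := by
  rw [sVol, sVol, mul_comm x y]

theorem sVol_rotate (n : ℕ) (x y z : ℝ) : sVol n x y z = sVol n z x y := by
  rw [sVol, sVol, mul_comm, mul_assoc]

theorem Scal_swap (n : ℕ) (x y z s : ℝ) : Scal n x y z s = Scal n y x z s := by
  unfold Scal rI rJ rK rH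
  ring

theorem Scal_rotate (n : ℕ) (x y z s : ℝ) : Scal n x y z s = Scal n z x y s := by
  unfold Scal rI rJ rK rH
  ring

theorem flowField_eq (n : ℕ) (p : Fin 3 → ℝ) :
    flowField n p = ![flowCoord n (p 0) (p 1) (p 2), flowCoord n (p 1) (p 0) (p 2),
      flowCoord n (p 2) (p 0) (p 1)] := by
  ext i
  fin_cases i
  · rfl
  · simp only [flowField, flowCoord, rJ_eq_rI]
    rw [sVol_swap n (p 1) (p 0) (p 2), Scal_swap n (p 1) (p 0) (p 2)]
    rfl
  · simp only [flowField, flowCoord, rK_eq_rI]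
    rw [← sVol_rotate n (p 0) (p 1) (p 2), ← Scal_rotate n (p 0) (p 1) (p 2)]
    rfl

section Linearization

variable {E : Type*} [NormedAddCommGroup E] [NormedSpace ℝ E] {n : ℕ} {x y z s : E → ℝ}
  {x' y' z' s' : E →L[ℝ] ℝ} {p : E}

theorem hasFDerivAt_sVol (hx : HasFDerivAt x x' p) (hy : HasFDerivAt y y' p)
    (hz : HasFDerivAt z z' p) (hx1 : x p = 1) (hy1 : y p = 1) (hz1 : z p = 1) :
    HasFDerivAt (fun q => sVol n (x q) (y q) (z q))
      (-(1 / (4 * n : ℝ)) • (x' + y' + z')) p := by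
  refine (((hx.mul hy).mul hz).rpow_const (Or.inl (by simp [hx1, hy1, hz1]))).congr_fderiv ?_
  ext v
  simp [hx1, hy1, hz1]
  ring

theorem hasFDerivAt_rI (hx : HasFDerivAt x x' p) (hy : HasFDerivAt y y' p)
    (hz : HasFDerivAt z z' p) (hs : HasFDerivAt s s' p)
    (hx1 : x p = 1) (hy1 : y p = 1) (hz1 : z p = 1) (hs1 : s p = 1) :
    HasFDerivAt (fun q => rI n (x q) (y q) (z q) (s q))
      ((2 + 4 * n : ℝ) • x' - (2 : ℝ) • (y' + z') - (8 * n : ℝ) • s') p := by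
  unfold rI
  refine (((((((hx.pow 2).sub (hy.pow 2)).sub (hz.pow 2)).div ((hx.mul hy).mul hz)
    (by simp [hx1, hy1, hz1])).const_mul 2).add
    ((hasFDerivAt_const 4 p).div hx (by simp [hx1]))).add
    ((hx.const_mul (4 * n)).div (hs.pow 2) (by simp [hs1]))).congr_fderiv ?_
  ext v
  simp [hx1, hy1, hz1, hs1]
  ring

theorem hasFDerivAt_rH (hx : HasFDerivAt x x' p) (hy : HasFDerivAt y y' p)
    (hz : HasFDerivAt z z' p) (hs : HasFDerivAt s s' p)
    (hx1 : x p = 1) (hy1 : y p = 1) (hz1 : z p = 1) (hs1 : s p = 1) :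
    HasFDerivAt (fun q => rH n (x q) (y q) (z q) (s q))
      ((-2 : ℝ) • (x' + y' + z') + (4 - 4 * n : ℝ) • s') p := by
  unfold rH
  refine ((((hx.add hy).add hz).div (hs.pow 2) (by simp [hs1])).const_mul (-2) |>.add
    ((hasFDerivAt_const (4 * n + 8 : ℝ) p).div hs (by simp [hs1]))).congr_fderiv ?_
  ext v
  simp [hx1, hy1, hz1, hs1]
  ring

theorem hasFDerivAt_Scal (hx : HasFDerivAt x x' p) (hy : HasFDerivAt y y' p)
    (hz : HasFDerivAt z z' p) (hs : HasFDerivAt s s' p)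
    (hx1 : x p = 1) (hy1 : y p = 1) (hz1 : z p = 1) (hs1 : s p = 1) :
    HasFDerivAt (fun q => Scal n (x q) (y q) (z q) (s q))
      (-(4 * n + 2 : ℝ) • (x' + y' + z') - (8 * n + 16 * n ^ 2 : ℝ) • s') p := by
  simp only [Scal, rJ_eq_rI, rK_eq_rI]
  refine ((((hasFDerivAt_rI hx hy hz hs hx1 hy1 hz1 hs1).add
    (hasFDerivAt_rI hy hx hz hs hy1 hx1 hz1 hs1)).add
    (hasFDerivAt_rI hz hx hy hs hz1 hx1 hy1 hs1)).add
    ((hasFDerivAt_rH hx hy hz hs hx1 hy1 hz1 hs1).const_mul (4 * n))).congr_fderiv ?_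
  ext v
  simp
  ring

/-- The round metric is Einstein, hence a critical point of the scalar curvature among
volume-one metrics. -/
theorem hasFDerivAt_Scal_sVol (hn : n ≠ 0) (hx : HasFDerivAt x x' p) (hy : HasFDerivAt y y' p)
    (hz : HasFDerivAt z z' p) (hx1 : x p = 1) (hy1 : y p = 1) (hz1 : z p = 1) :
    HasFDerivAt (fun q => Scal n (x q) (y q) (z q) (sVol n (x q) (y q) (z q)))
      (0 : E →L[ℝ] ℝ) p := by
  refine (hasFDerivAt_Scal hx hy hz (hasFDerivAt_sVol hx hy hz hx1 hy1 hz1) hx1 hy1 hz1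
    (by rw [hx1, hy1, hz1, sVol_one n])).congr_fderiv ?_
  ext v
  simp
  field_simp
  ring

theorem hasFDerivAt_flowCoord (hn : n ≠ 0) (hx : HasFDerivAt x x' p) (hy : HasFDerivAt y y' p)
    (hz : HasFDerivAt z z' p) (hx1 : x p = 1) (hy1 : y p = 1) (hz1 : z p = 1) :
    HasFDerivAt (fun q => flowCoord n (x q) (y q) (z q)) ((-8 * (1 + n) : ℝ) • x') p := by
  have hr := hasFDerivAt_rI (n := n) hx hy hz (hasFDerivAt_sVol hx hy hz hx1 hy1 hz1) hx1 hy1 hz1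
    (by rw [hx1, hy1, hz1, sVol_one n])
  have hS := (hasFDerivAt_Scal_sVol hn hx hy hz hx1 hy1 hz1).div
    (hasFDerivAt_const (4 * n + 3 : ℝ) p) (by positivity)
  refine ((hx.const_mul (-2)).mul (hr.sub hS)).congr_fderiv ?_
  ext v
  simp [hx1, hy1, hz1, sVol_one, rI_sub_Scal_div_round]
  field_simp
  ring

end Linearization

theorem hasFDerivAt_flowField {n : ℕ} (hn : n ≠ 0) :
    HasFDerivAt (flowField n) ((-8 * (1 + n) : ℝ) • ContinuousLinearMap.id ℝ (Fin 3 → ℝ))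
      (fun _ => 1) := by
  have hp (i : Fin 3) := hasFDerivAt_apply (𝕜 := ℝ) i (fun _ : Fin 3 => (1 : ℝ))
  refine hasFDerivAt_pi'' fun i => ?_
  rw [funext (flowField_eq n)]
  fin_cases i
  · exact (hasFDerivAt_flowCoord hn (hp 0) (hp 1) (hp 2) rfl rfl rfl).congr_fderiv (by ext; simp)
  · exact (hasFDerivAt_flowCoord hn (hp 1) (hp 0) (hp 2) rfl rfl rfl).congr_fderiv (by ext; simp)
  · exact (hasFDerivAt_flowCoord hn (hp 2) (hp 0) (hp 1) rfl rfl rfl).congr_fderiv (by ext; simp)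

/-- At the round metric `x = y = z = 1`, the linearization of the normalized
Ricci flow has `a = −8(1+n)` on the diagonal and `b = 0` off-diagonal; since all
eigenvalues are negative, the round metric is a stable node. -/
theorem round_metric_stable (n : ℕ) (hn : 1 ≤ n) :
    (∀ i j : Fin 3,
      (fderiv ℝ (flowField n) (fun _ => (1:ℝ))) (Pi.single j 1) i
        = if i = j then -8 * (1 + (n:ℝ)) else 0)
    ∧ -8 * (1 + (n:ℝ)) < 0 := by
  refine ⟨fun i j => ?_, mul_neg_of_neg_of_pos (by norm_num) (by positivity)⟩
  rw [(hasFDerivAt_flowField (by omega)).fderiv]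
  simp [Pi.single_apply]
end

section
/- For y, s > 0 and integer n ≥ 1, the scalar curvature of the metric with x = 1/(y²s^{4n}), eigenvalues (x, y, y, s·(4n times)) is S = 16n²/s − 8ny/s² − (1/(s^{4n}y²))(4n/s² + 2/y²) + 32n/s + 8/y, and it satisfies the upper bound S < (8n/s)(2n + 4 − y/s) + 8/y. -/
/-- For the volume-1 `Sp(n+1)U(1)`-invariant metric with `x = 1/(y²s^{4n})`,
`z = y`, the scalar curvature equals
`S = 16n²/s − 8ny/s² − (1/(s^{4n}y²))(4n/s² + 2/y²) + 32n/s + 8/y`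
and satisfies `S < (8n/s)(2n + 4 − y/s) + 8/y`. -/
theorem scalar_ancient_form (n : ℕ) (hn : 1 ≤ n) (y s : ℝ)
    (hy : 0 < y) (hs : 0 < s) :
    let x : ℝ := 1 / (y^2 * s^(4*n))
    let S : ℝ := 4/x + 4/y + 4/y + 16*n*(n+2)/s - 4*n*((x + y + y)/s^2)
      - 2*((x^2 + y^2 + y^2)/(x*y*y))
    S = 16*(n:ℝ)^2/s - 8*n*y/s^2 - (1/(s^(4*n)*y^2)) * (4*n/s^2 + 2/y^2)
        + 32*n/s + 8/y
    ∧ S < (8*n/s) * (2*n + 4 - y/s) + 8/y := by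
  intro x S
  have hsp : (0:ℝ) < s^(4*n) := pow_pos hs _
  have heq : S = 16*(n:ℝ)^2/s - 8*n*y/s^2 - (1/(s^(4*n)*y^2)) * (4*n/s^2 + 2/y^2)
      + 32*n/s + 8/y := by
    show 4/x + 4/y + 4/y + 16*n*(n+2)/s - 4*n*((x + y + y)/s^2)
      - 2*((x^2 + y^2 + y^2)/(x*y*y)) = _
    have hx : x = 1 / (y^2 * s^(4*n)) := rfl
    rw [hx]
    field_simp
    ring
  refine ⟨heq, ?_⟩
  rw [heq]
  have hpos : 0 < (1/(s^(4*n)*y^2)) * (4*(n:ℝ)/s^2 + 2/y^2) := by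
    apply mul_pos
    · positivity
    · positivity
  have hbound : (8*(n:ℝ)/s) * (2*n + 4 - y/s) + 8/y
      = 16*(n:ℝ)^2/s - 8*n*y/s^2 + 32*n/s + 8/y := by
    field_simp; ring
  rw [hbound]
  linarith
end

section
/- For y, s > 0 and n ≥ 1 with x = 1/(y²s^{4n}), the difference of Ricci eigenvalues r_j − r_h equals 2(y − s)(s + y + 2s^{4n}y³((1+n)y − s)) / (y⁴ s^{2+4n}); in particular, r_j − r_h and (y − s)(s + y + 2s^{4n}y³((1+n)y − s)) have the same sign. -/
/-- For the `Sp(n+1)U(1)`-invariant metric with `x = 1/(y²s^{4n})`, `z = y`, the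
difference of Ricci eigenvalues factors as
`r_j − r_h = 2(y−s)(s + y + 2s^{4n}y³((1+n)y − s))/(y⁴s^{2+4n})`; in particular
`r_j − r_h` has the same sign as `(y−s)(s + y + 2s^{4n}y³((1+n)y − s))`. -/
theorem rj_sub_rh_factorization (n : ℕ) (hn : 1 ≤ n) (y s : ℝ)
    (hy : 0 < y) (hs : 0 < s) :
    let x : ℝ := 1 / (y^2 * s^(4*n))
    let rj : ℝ := -2*x/y^2 + 4/y + 4*n*y/s^2
    let rh : ℝ := -2*(x + 2*y)/s^2 + (4*n + 8)/s
    rj - rh = 2*(y - s)*(s + y + 2*s^(4*n)*y^3*((1 + (n:ℝ))*y - s))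
        / (y^4 * s^(2 + 4*n))
    ∧ (0 < rj - rh ↔ 0 < (y - s)*(s + y + 2*s^(4*n)*y^3*((1 + (n:ℝ))*y - s))) := by
  intro x rj rh
  have hy0 : y ≠ 0 := hy.ne'
  have hs0 : s ≠ 0 := hs.ne'
  have hsn : (0:ℝ) < s^(4*n) := pow_pos hs _
  have heq : rj - rh = 2*(y - s)*(s + y + 2*s^(4*n)*y^3*((1 + (n:ℝ))*y - s))
      / (y^4 * s^(2 + 4*n)) := by
    show (-2*(1 / (y^2 * s^(4*n)))/y^2 + 4/y + 4*n*y/s^2)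
      - (-2*((1 / (y^2 * s^(4*n))) + 2*y)/s^2 + (4*n + 8)/s) = _
    rw [pow_add]
    field_simp
    ring
  refine ⟨heq, ?_⟩
  rw [heq]
  have hden : (0:ℝ) < y^4 * s^(2 + 4*n) := by positivity
  rw [div_pos_iff]
  constructor
  · rintro (⟨h1, _⟩ | ⟨_, h2⟩)
    · nlinarith
    · linarith
  · intro h
    left
    exact ⟨by nlinarith, hden⟩
end

section
/- For integer n ≥ 1, the only values t > 0 for which the metric y = t·s on CP^{2n+1} (i.e. the family g = y⟨,⟩_(j) + y⟨,⟩_(k) + s⟨,⟩_{H^n}) is Einstein are t = 1 (the Fubini-Study metric) and t = 1/(n+1) (Ziller's second Einstein metric). Equivalently, the Einstein condition r_j = r_h for these metrics, where r_j = 4/y + 4ny/s² and r_h = −4y/s² + (4n+8)/s (the x → 0 degenerations), holds if and only if y/s = 1 or y/s = 1/(n+1). -/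
/-! Clearing denominators, `r_j = r_h` becomes `(m + 1) y² - (m + 2) y s + s² = 0`, a quadratic form
that factors as `(y - s) ((m + 1) y - s)`; its two roots give the two ratios. -/

theorem einstein_condition_iff_mul_eq_zero (m : ℝ) {y s : ℝ} (hy : y ≠ 0) (hs : s ≠ 0) :
    4/y + 4*m*y/s^2 = -4*y/s^2 + (4*m + 8)/s ↔ (y - s) * ((m + 1)*y - s) = 0 := by
  have hfactor : 4/y + 4*m*y/s^2 - (-4*y/s^2 + (4*m + 8)/s)
      = 4 / (y * s^2) * ((y - s) * ((m + 1)*y - s)) := by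
    field_simp
    ring
  rw [← sub_eq_zero, hfactor, mul_eq_zero, or_iff_right (by positivity)]

theorem mul_sub_eq_zero_iff_div_eq {m y s : ℝ} (hm : m + 1 ≠ 0) (hs : s ≠ 0) :
    (y - s) * ((m + 1)*y - s) = 0 ↔ y/s = 1 ∨ y/s = 1/(m + 1) := by
  rw [mul_eq_zero, sub_eq_zero, sub_eq_zero, div_eq_one_iff_eq hs, div_eq_div_iff hs hm, one_mul,
    mul_comm]

theorem cp_einstein_metrics_general (n : ℕ) (y s : ℝ)
    (hy : 0 < y) (hs : 0 < s) :
    4/y + 4*(n:ℝ)*y/s^2 = -4*y/s^2 + (4*(n:ℝ) + 8)/s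
      ↔ y/s = 1 ∨ y/s = 1/((n:ℝ) + 1) := by
  rw [einstein_condition_iff_mul_eq_zero _ hy.ne' hs.ne']
  exact mul_sub_eq_zero_iff_div_eq (by positivity) hs.ne'

/-- For the homogeneous metrics on `CP^{2n+1}` with parameters `y` (on the
2-dimensional summand) and `s` (on the 4n-dimensional summand), the Einstein
condition `r_j = r_h`, with `r_j = 4/y + 4ny/s²` and `r_h = −4y/s² + (4n+8)/s`,
holds iff `y/s = 1` (Fubini–Study) or `y/s = 1/(n+1)` (Ziller's second
Einstein metric). -/
theorem cp_einstein_metrics (n : ℕ) (hn : 1 ≤ n) (y s : ℝ)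
    (hy : 0 < y) (hs : 0 < s) :
    4/y + 4*(n:ℝ)*y/s^2 = -4*y/s^2 + (4*(n:ℝ) + 8)/s
      ↔ y/s = 1 ∨ y/s = 1/((n:ℝ) + 1) :=
  cp_einstein_metrics_general n y s hy hs
end

section
/- For x, y, z > 0 with x ≤ y ≤ z, n ≥ 1, and xyz sufficiently large, the scalar curvature S = 4/x + 4/y + 4/z − 2z/(xy) − 2y/(xz) − 2x/(yz) + 16n(n+2)(xyz)^{1/(4n)} − 4n(x+y+z)(xyz)^{1/(2n)} is negative whenever x is bounded below by a positive constant δ and z is sufficiently large. Precisely: for every δ > 0 there exists R > 0 such that if x ≥ δ and xyz ≥ R then S < 0. -/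
/-- If `x` is bounded below by `δ > 0` and `xyz` is sufficiently large, the
scalar curvature of the volume-1 `Sp(n+1)`-invariant metric (with
`s = (xyz)^{-1/(4n)}`) is negative: for every `δ > 0` there is `R > 0` such that
`x ≥ δ`, `x ≤ y ≤ z`, `xyz ≥ R` imply `S < 0`. -/
theorem scalar_negative_large_volume_density (n : ℕ) (hn : 1 ≤ n) :
    ∀ δ : ℝ, 0 < δ → ∃ R : ℝ, 0 < R ∧
      ∀ x y z : ℝ, 0 < x → x ≤ y → y ≤ z → δ ≤ x → R ≤ x*y*z →
        4/x + 4/y + 4/z - 2*z/(x*y) - 2*y/(x*z) - 2*x/(y*z)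
          + 16*(n:ℝ)*((n:ℝ)+2)*(x*y*z) ^ (1/(4*(n:ℝ)))
          - 4*(n:ℝ)*(x+y+z)*(x*y*z) ^ (1/(2*(n:ℝ))) < 0 := by
  intro δ hδ
  have hN1 : (1:ℝ) ≤ (n:ℝ) := by exact_mod_cast hn
  set N : ℝ := (n:ℝ) with hNdef
  have hNpos : (0:ℝ) < N := by linarith
  set M : ℝ := max 1 ((12/δ + 16*N*(N+2) + 1)/(4*N*δ)) with hMdef
  have hM1 : (1:ℝ) ≤ M := le_max_left _ _
  have hMpos : (0:ℝ) < M := lt_of_lt_of_le one_pos hM1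
  refine ⟨M ^ (4*N), Real.rpow_pos_of_pos hMpos _, ?_⟩
  intro x y z hx hxy hyz hδx hR
  have hy : 0 < y := lt_of_lt_of_le hx hxy
  have hz : 0 < z := lt_of_lt_of_le hy hyz
  have hP : 0 < x*y*z := by positivity
  have h4N : (0:ℝ) < 4*N := by linarith
  set p : ℝ := (x*y*z) ^ (1/(4*N)) with hpdef
  have hppos : 0 < p := Real.rpow_pos_of_pos hP _
  have hpM : M ≤ p := by
    have h := Real.rpow_le_rpow (le_of_lt (Real.rpow_pos_of_pos hMpos (4*N))) hR
      (by positivity : (0:ℝ) ≤ 1/(4*N))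
    rwa [← Real.rpow_mul hMpos.le, mul_one_div, div_self (ne_of_gt h4N),
      Real.rpow_one] at h
  have hp1 : (1:ℝ) ≤ p := le_trans hM1 hpM
  have hsq : (x*y*z) ^ (1/(2*N)) = p^2 := by
    rw [hpdef, ← Real.rpow_natCast ((x*y*z) ^ (1/(4*N))) 2, ← Real.rpow_mul hP.le]
    congr 1
    push_cast
    field_simp
    ring
  rw [hsq]
  have hA : 4/x + 4/y + 4/z ≤ 12/δ := by
    have h1 : 4/x ≤ 4/δ := by gcongr
    have h2 : 4/y ≤ 4/δ := by gcongr; linarith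
    have h3 : 4/z ≤ 4/δ := by gcongr; linarith
    have : 12/δ = 4/δ + 4/δ + 4/δ := by ring
    linarith
  have hneg : 0 ≤ 2*z/(x*y) + 2*y/(x*z) + 2*x/(y*z) := by positivity
  have hsum : δ*(4*N*p^2) ≤ (x+y+z)*(4*N*p^2) := by
    apply mul_le_mul_of_nonneg_right (by linarith) (by positivity)
  have hMle : (12/δ + 16*N*(N+2) + 1)/(4*N*δ) ≤ p := le_trans (le_max_right _ _) hpM
  have h1 : 12/δ + 16*N*(N+2) + 1 ≤ 4*N*δ*p := by
    rw [div_le_iff₀ (by positivity)] at hMle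
    linarith
  have hδ12 : (0:ℝ) ≤ 12/δ := by positivity
  have key : 12/δ + 16*N*(N+2)*p - 4*N*δ*p^2 < 0 := by
    nlinarith [mul_le_mul_of_nonneg_right h1 (le_trans zero_le_one hp1),
      mul_nonneg hδ12 (by linarith : (0:ℝ) ≤ p - 1)]
  nlinarith [key, hA, hneg, hsum]
end
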